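/- Let X be an n×n complex Hermitian matrix and f : ℝ → ℝ a function. Then the realification of F(X) equals F(X̄): that is, with F the matrix extension of f, one has \overline{F(X)} = F(X̄), where X̄ is the realification of X (a real symmetric 2n×2n matrix, so F(X̄) is computed via its spectral decomposition). -/
import Mathlib


open Matrix

/-- The matrix extension `F` of `f : ℝ → ℝ`: for Hermitian (or real symmetric)
`A = U Diag(λ) U*`, `F(A) := U Diag(f(λᵢ)) U*` (junk value `0` if `A` is not Hermitian). -/
noncomputable def matExt {𝕜 : Type*} [RCLike 𝕜] {n : Type*} [Fintype n] [DecidableEq n]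
    (f : ℝ → ℝ) (A : Matrix n n 𝕜) : Matrix n n 𝕜 :=
  if hA : A.IsHermitian then
    (hA.eigenvectorUnitary : Matrix n n 𝕜) *
      Matrix.diagonal (fun i => (f (hA.eigenvalues i) : 𝕜)) *
      star (hA.eigenvectorUnitary : Matrix n n 𝕜)
  else 0

/-- The realification of a complex `n×n` matrix `X = X_r + i X_i`: the real `2n×2n` block
matrix `[[X_r, −X_i],[X_i, X_r]]`. -/
def realify {n : ℕ} (X : Matrix (Fin n) (Fin n) ℂ) :
    Matrix (Fin n ⊕ Fin n) (Fin n ⊕ Fin n) ℝ :=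
  Matrix.fromBlocks (X.map Complex.re) (-(X.map Complex.im))
    (X.map Complex.im) (X.map Complex.re)

lemma realify_mul {n : ℕ} (X Y : Matrix (Fin n) (Fin n) ℂ) :
    realify (X * Y) = realify X * realify Y := by
  ext (i | i) (j | j) <;>
    simp [realify, Matrix.mul_apply, Fintype.sum_sum_type, Complex.mul_re, Complex.mul_im,
      Finset.sum_add_distrib, Finset.sum_sub_distrib, sub_eq_add_neg, add_comm]

lemma realify_one {n : ℕ} : realify (1 : Matrix (Fin n) (Fin n) ℂ) = 1 := by
  ext (i | i) (j | j) <;>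
    simp [realify, Matrix.one_apply, apply_ite]

lemma realify_add {n : ℕ} (X Y : Matrix (Fin n) (Fin n) ℂ) :
    realify (X + Y) = realify X + realify Y := by
  ext (i | i) (j | j) <;> simp [realify, add_comm]

lemma realify_zero {n : ℕ} : realify (0 : Matrix (Fin n) (Fin n) ℂ) = 0 := by
  ext (i | i) (j | j) <;> simp [realify]

lemma realify_star {n : ℕ} (X : Matrix (Fin n) (Fin n) ℂ) :
    realify (star X) = star (realify X) := by
  ext (i | i) (j | j) <;>
    simp [realify, Matrix.star_apply, Complex.conj_re, Complex.conj_im]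

lemma realify_algebraMap {n : ℕ} (r : ℝ) :
    realify (algebraMap ℝ (Matrix (Fin n) (Fin n) ℂ) r) =
      algebraMap ℝ (Matrix (Fin n ⊕ Fin n) (Fin n ⊕ Fin n) ℝ) r := by
  ext (i | i) (j | j) <;>
    simp only [realify, Matrix.algebraMap_eq_diagonal, fromBlocks_apply₁₁, fromBlocks_apply₁₂,
      fromBlocks_apply₂₁, fromBlocks_apply₂₂, Matrix.map_apply, Matrix.neg_apply,
      Matrix.diagonal_apply, apply_ite Complex.re, apply_ite Complex.im,
      Complex.ofReal_re, Complex.ofReal_im, ite_self, Sum.inl.injEq, Sum.inr.injEq] <;>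
    simp [Pi.algebraMap_apply, Complex.coe_algebraMap, Algebra.algebraMap_self]

lemma realify_continuous {n : ℕ} : Continuous (realify (n := n)) := by
  apply continuous_matrix
  rintro (i | i) (j | j) <;> simp only [realify, fromBlocks_apply₁₁, fromBlocks_apply₁₂,
    fromBlocks_apply₂₁, fromBlocks_apply₂₂, Matrix.map_apply, Matrix.neg_apply] <;> fun_prop

/-- `realify` bundled as a star algebra homomorphism over `ℝ`. -/
noncomputable def realifyHom (n : ℕ) :
    Matrix (Fin n) (Fin n) ℂ →⋆ₐ[ℝ] Matrix (Fin n ⊕ Fin n) (Fin n ⊕ Fin n) ℝ where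
  toFun := realify
  map_one' := realify_one
  map_mul' := realify_mul
  map_zero' := realify_zero
  map_add' := realify_add
  commutes' := realify_algebraMap
  map_star' := realify_star

lemma realify_isHermitian {n : ℕ} {X : Matrix (Fin n) (Fin n) ℂ} (hX : X.IsHermitian) :
    (realify X).IsHermitian := by
  rw [Matrix.IsHermitian, ← Matrix.star_eq_conjTranspose, ← realify_star,
    Matrix.star_eq_conjTranspose, hX.eq]

lemma matExt_eq_cfc {𝕜 : Type*} [RCLike 𝕜] {n : Type*} [Fintype n] [DecidableEq n]
    (f : ℝ → ℝ) {A : Matrix n n 𝕜} (hA : A.IsHermitian) :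
    matExt f A = cfc f A := by
  rw [hA.cfc_eq, matExt, dif_pos hA, Matrix.IsHermitian.cfc]
  rfl

/-- For a complex Hermitian `X` and any `f : ℝ → ℝ`, the realification of `F(X)` equals
`F(X̄)`, where `F` is the matrix extension of `f` and `X̄` is the realification of `X`. -/
theorem realify_matExt {n : ℕ} (X : Matrix (Fin n) (Fin n) ℂ)
    (hX : X.IsHermitian) (f : ℝ → ℝ) :
    realify (matExt f X) = matExt f (realify X) := by
  have hY : (realify X).IsHermitian := realify_isHermitian hX
  rw [matExt_eq_cfc f hX, matExt_eq_cfc f hY]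
  have hf : ContinuousOn f (spectrum ℝ X) := by
    rw [continuousOn_iff_continuous_restrict]; fun_prop
  exact StarAlgHom.map_cfc (realifyHom n) f X hf realify_continuous hX hY
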